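/- arXiv:2210.06718 — 2 statements merged into one kernel-verified Lean document; each statement's English description precedes it below -/
import Mathlib

section
/- One-step backup bound in low-rank MDPs: Under the low-rank structure and offline-distribution assumptions below, for every h ∈ {1,…,H−1}, every policy π, and every function g : S×A → ℝ: Σ_{s,a} d^π_h(s,a)·g(s,a) ≤ ( Σ_{s,a} d^π_{h−1}(s,a)·sqrt( φ_{h−1}(s,a)ᵀ Σ_{ν_{h−1}}⁻¹ φ_{h−1}(s,a) ) ) · sqrt( α · Σ_{s,a} ν_h(s,a)·g(s,a)² ). -/
open Finset Matrix
open scoped Classical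


section Helpers

lemma dot_helper {d : ℕ} (M : Matrix (Fin d) (Fin d) ℝ) (a b : Fin d → ℝ) :
    (M *ᵥ a) ⬝ᵥ b = a ⬝ᵥ (Mᵀ *ᵥ b) := by
  simp only [dotProduct, mulVec, dotProduct, transpose_apply, Finset.sum_mul, Finset.mul_sum]
  rw [Finset.sum_comm]
  exact Finset.sum_congr rfl fun i _ => Finset.sum_congr rfl fun j _ => by ring

lemma cs_mat {d : ℕ} {M : Matrix (Fin d) (Fin d) ℝ} (hM : M.PosDef) (x y : Fin d → ℝ) :
    (x ⬝ᵥ M *ᵥ y) ^ 2 ≤ (x ⬝ᵥ M *ᵥ x) * (y ⬝ᵥ M *ᵥ y) := by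
  by_cases hy : y = 0
  · simp [hy, Matrix.mulVec_zero]
  · have hsym : Mᵀ = M := hM.1
    have ha : 0 < y ⬝ᵥ M *ᵥ y := by simpa using hM.dotProduct_mulVec_pos hy
    have hb : ∀ u v : Fin d → ℝ, u ⬝ᵥ M *ᵥ v = v ⬝ᵥ M *ᵥ u := by
      intro u v
      have h := dot_helper M u v
      rw [hsym] at h
      rw [← h, dotProduct_comm]
    set a := y ⬝ᵥ M *ᵥ y with hadef
    set b := x ⬝ᵥ M *ᵥ y with hbdef
    set c := x ⬝ᵥ M *ᵥ x with hcdef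
    have key : 0 ≤ c - 2 * (b / a) * b + (b / a) ^ 2 * a := by
      have h0 : 0 ≤ (x - (b / a) • y) ⬝ᵥ M *ᵥ (x - (b / a) • y) := by
        by_cases hz : x - (b / a) • y = 0
        · simp [hz, Matrix.mulVec_zero]
        · exact le_of_lt (by simpa using hM.dotProduct_mulVec_pos hz)
      have hexp : (x - (b / a) • y) ⬝ᵥ M *ᵥ (x - (b / a) • y)
          = c - 2 * (b / a) * b + (b / a) ^ 2 * a := by
        rw [Matrix.mulVec_sub, Matrix.mulVec_smul]
        simp only [dotProduct_sub, sub_dotProduct, smul_dotProduct, dotProduct_smul,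
          smul_eq_mul]
        rw [hb y x]
        ring
      linarith [hexp ▸ h0]
    have hfin : 0 ≤ c - b ^ 2 / a := by
      have h1 : (b / a) ^ 2 * a = b ^ 2 / a := by field_simp
      have h2 : 2 * (b / a) * b = 2 * (b ^ 2 / a) := by field_simp
      nlinarith [key]
    calc b ^ 2 = (b ^ 2 / a) * a := by rw [div_mul_cancel₀ _ ha.ne']
    _ ≤ c * a := by nlinarith

lemma sq_sum_le {ι : Type*} (s : Finset ι) (p f : ι → ℝ) (hp : ∀ i ∈ s, 0 ≤ p i) :
    (∑ i ∈ s, p i * f i) ^ 2 ≤ (∑ i ∈ s, p i) * ∑ i ∈ s, p i * f i ^ 2 := by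
  have h := Finset.sum_mul_sq_le_sq_mul_sq s (fun i => Real.sqrt (p i))
    (fun i => Real.sqrt (p i) * f i)
  have e1 : ∀ i ∈ s, Real.sqrt (p i) * (Real.sqrt (p i) * f i) = p i * f i := by
    intro i hi
    rw [← mul_assoc, Real.mul_self_sqrt (hp i hi)]
  have e2 : ∀ i ∈ s, Real.sqrt (p i) ^ 2 = p i := fun i hi => Real.sq_sqrt (hp i hi)
  have e3 : ∀ i ∈ s, (Real.sqrt (p i) * f i) ^ 2 = p i * f i ^ 2 := by
    intro i hi
    rw [mul_pow, Real.sq_sqrt (hp i hi)]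
  rw [Finset.sum_congr rfl e1, Finset.sum_congr rfl e2, Finset.sum_congr rfl e3] at h
  exact h

lemma sum3_swap {σ τ υ : Type*} [Fintype σ] [Fintype τ] [Fintype υ]
    (f : σ → τ → υ → ℝ) :
    ∑ s, ∑ a, ∑ c, f s a c = ∑ c, ∑ s, ∑ a, f s a c :=
  calc ∑ s, ∑ a, ∑ c, f s a c
      = ∑ s, ∑ c, ∑ a, f s a c := Finset.sum_congr rfl fun _ _ => Finset.sum_comm
    _ = ∑ c, ∑ s, ∑ a, f s a c := Finset.sum_comm

lemma sum4_swap {ι κ σ τ : Type*} [Fintype ι] [Fintype κ] [Fintype σ] [Fintype τ]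
    (f : ι → κ → σ → τ → ℝ) :
    ∑ i, ∑ j, ∑ s, ∑ a, f i j s a = ∑ s, ∑ a, ∑ i, ∑ j, f i j s a :=
  calc ∑ i, ∑ j, ∑ s, ∑ a, f i j s a
      = ∑ i, ∑ s, ∑ j, ∑ a, f i j s a :=
        Finset.sum_congr rfl fun _ _ => Finset.sum_comm
    _ = ∑ s, ∑ i, ∑ j, ∑ a, f i j s a := Finset.sum_comm
    _ = ∑ s, ∑ i, ∑ a, ∑ j, f i j s a :=
        Finset.sum_congr rfl fun _ _ => Finset.sum_congr rfl fun _ _ => Finset.sum_comm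
    _ = ∑ s, ∑ a, ∑ i, ∑ j, f i j s a :=
        Finset.sum_congr rfl fun _ _ => Finset.sum_comm

lemma quad_sum {S A : Type*} [Fintype S] [Fintype A] {d : ℕ}
    (c : S → A → ℝ) (x : S → A → Fin d → ℝ) (v : Fin d → ℝ) :
    v ⬝ᵥ (∑ s, ∑ a, c s a • Matrix.vecMulVec (x s a) (x s a)) *ᵥ v
      = ∑ s, ∑ a, c s a * (x s a ⬝ᵥ v) ^ 2 := by
  simp only [dotProduct, mulVec, dotProduct, Matrix.sum_apply, Matrix.smul_apply,
    Matrix.vecMulVec_apply, smul_eq_mul, Finset.mul_sum, Finset.sum_mul, pow_two]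
  rw [sum4_swap]
  exact Finset.sum_congr rfl fun s _ => Finset.sum_congr rfl fun a _ =>
    Finset.sum_congr rfl fun i _ => Finset.sum_congr rfl fun j _ => by ring

end Helpers

/-- Max over the (finite, nonempty) action space. -/
noncomputable def supA {A : Type*} [Fintype A] [Nonempty A] (g : A → ℝ) : ℝ :=
  Finset.univ.sup' Finset.univ_nonempty g

/-- An action achieving the maximum of `g`. -/
noncomputable def argmaxA {A : Type*} [Fintype A] [Nonempty A] (g : A → ℝ) : A :=
  Classical.choose (Finset.exists_mem_eq_sup' (Finset.univ_nonempty (α := A)) g)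

/-- Bellman optimality operator at step `h` applied to `g : S × A → ℝ`. -/
noncomputable def bellman {S A : Type*} [Fintype S] [Fintype A] [Nonempty A]
    (P : ℕ → S → A → S → ℝ) (r : ℕ → S → A → ℝ) (h : ℕ)
    (g : S → A → ℝ) (s : S) (a : A) : ℝ :=
  r h s a + ∑ s', P h s a s' * supA (g s')

/-- Auxiliary value function, by recursion on the number of remaining steps. -/
noncomputable def Vaux {S A : Type*} [Fintype S] [Fintype A]
    (P : ℕ → S → A → S → ℝ) (r : ℕ → S → A → ℝ) (π : ℕ → S → A → ℝ) (H : ℕ) :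
    ℕ → S → ℝ
  | 0, _ => 0
  | k + 1, s => ∑ a, π (H - (k + 1)) s a *
      (r (H - (k + 1)) s a + ∑ s', P (H - (k + 1)) s a s' * Vaux P r π H k s')

/-- Value function `V^π_h(s)` of policy `π` (with `V^π_H ≡ 0`). -/
noncomputable def Vval {S A : Type*} [Fintype S] [Fintype A]
    (P : ℕ → S → A → S → ℝ) (r : ℕ → S → A → ℝ) (π : ℕ → S → A → ℝ)
    (H h : ℕ) (s : S) : ℝ :=
  Vaux P r π H (H - h) s

/-- Occupancy measure `d^π_h(s,a)`. -/
noncomputable def occ {S A : Type*} [Fintype S] [Fintype A]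
    (P : ℕ → S → A → S → ℝ) (d0 : S → ℝ) (π : ℕ → S → A → ℝ) :
    ℕ → S → A → ℝ
  | 0, s, a => d0 s * π 0 s a
  | h + 1, s', a' => (∑ s, ∑ a, occ P d0 π h s a * P h s a s') * π (h + 1) s' a'

/-- The deterministic greedy policy w.r.t. the tuple `f`. -/
noncomputable def greedy {S A : Type*} [Fintype A] [Nonempty A]
    (f : ℕ → S → A → ℝ) (h : ℕ) (s : S) (a : A) : ℝ :=
  if a = argmaxA (f h s) then 1 else 0


lemma occ_nonneg {S A : Type*} [Fintype S] [Fintype A]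
    (P : ℕ → S → A → S → ℝ) (d0 : S → ℝ) (π : ℕ → S → A → ℝ)
    (hd0 : ∀ s, 0 ≤ d0 s) :
    ∀ k, (∀ j, j ≤ k → ∀ s a, 0 ≤ π j s a) → (∀ j, j < k → ∀ s a s', 0 ≤ P j s a s') →
      ∀ s a, 0 ≤ occ P d0 π k s a := by
  intro k
  induction k with
  | zero =>
    intro hπ _ s a
    exact mul_nonneg (hd0 s) (hπ 0 le_rfl s a)
  | succ n ih =>
    intro hπ hP s a
    have hsum : 0 ≤ ∑ sb, ∑ ab, occ P d0 π n sb ab * P n sb ab s := by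
      refine Finset.sum_nonneg fun sb _ => Finset.sum_nonneg fun ab _ => ?_
      exact mul_nonneg
        (ih (fun j hj => hπ j (hj.trans (Nat.le_succ n)))
          (fun j hj => hP j (hj.trans (Nat.lt_succ_self n))) sb ab)
        (hP n (Nat.lt_succ_self n) sb ab s)
    exact mul_nonneg hsum (hπ (n + 1) le_rfl s a)

/-- **One-step backup bound in low-rank MDPs.** -/
theorem low_rank_one_step_backup
    {S A : Type*} [Fintype S] [Fintype A] [Nonempty S] [Nonempty A]
    (H : ℕ) (hH : 1 ≤ H)
    (P : ℕ → S → A → S → ℝ)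
    (hPnn : ∀ h < H, ∀ s a s', 0 ≤ P h s a s')
    (hPsum : ∀ h < H, ∀ s a, ∑ s', P h s a s' = 1)
    (r : ℕ → S → A → ℝ)
    (d0 : S → ℝ) (hd0nn : ∀ s, 0 ≤ d0 s) (hd0sum : ∑ s, d0 s = 1)
    (dd : ℕ) (φ : ℕ → S → A → Fin dd → ℝ) (μm : ℕ → S → Fin dd → ℝ)
    (hlowrank : ∀ h < H, ∀ s a s', P h s a s' = μm h s' ⬝ᵥ φ h s a)
    (ν : ℕ → S → A → ℝ)
    (hνpos : ∀ h < H, ∀ s a, 0 < ν h s a)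
    (hνsum : ∀ h < H, ∑ s, ∑ a, ν h s a = 1)
    (hνinit : ∀ s, ∑ a, ν 0 s a = d0 s)
    (hνmarg : ∀ h, 1 ≤ h → h < H → ∀ s,
      ∑ a, ν h s a = ∑ sb, ∑ ab, ν (h - 1) sb ab * P (h - 1) sb ab s)
    (hpd : ∀ h < H, (∑ s, ∑ a, ν h s a • Matrix.vecMulVec (φ h s a) (φ h s a)).PosDef)
    (α : ℝ) (hα : 0 < α)
    (π : ℕ → S → A → ℝ)
    (hπnn : ∀ h < H, ∀ s a, 0 ≤ π h s a)
    (hπsum : ∀ h < H, ∀ s, ∑ a, π h s a = 1)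
    (hratio : ∀ h < H, ∀ s a, π h s a * (∑ a', ν h s a') ≤ α * ν h s a) :
    ∀ h, 1 ≤ h → h < H → ∀ g : S → A → ℝ,
      ∑ s, ∑ a, occ P d0 π h s a * g s a ≤
        (∑ s, ∑ a, occ P d0 π (h - 1) s a *
            Real.sqrt (φ (h - 1) s a ⬝ᵥ
              (∑ s', ∑ a', ν (h - 1) s' a' •
                  Matrix.vecMulVec (φ (h - 1) s' a') (φ (h - 1) s' a'))⁻¹ *ᵥ
                φ (h - 1) s a)) *
          Real.sqrt (α * ∑ s, ∑ a, ν h s a * g s a ^ 2) := by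
  intro h h1 hhH g
  obtain ⟨k, rfl⟩ : ∃ k, h = k + 1 := ⟨h - 1, (Nat.succ_pred_eq_of_pos h1).symm⟩
  have hkH : k < H := Nat.lt_of_succ_lt hhH
  simp only [Nat.add_sub_cancel]
  set G : S → ℝ := fun s' => ∑ a', π (k + 1) s' a' * g s' a' with hG
  set w : Fin dd → ℝ := fun i => ∑ s', G s' * μm k s' i with hw
  set Sig : Matrix (Fin dd) (Fin dd) ℝ :=
    ∑ s, ∑ a, ν k s a • Matrix.vecMulVec (φ k s a) (φ k s a) with hSig
  have hpdk : Sig.PosDef := hpd k hkH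
  have hdet : IsUnit Sig.det := hpdk.det_pos.ne'.isUnit
  have hsym : Sigᵀ = Sig := by
    rw [hSig]
    ext i j
    simp only [transpose_apply, Matrix.sum_apply, Matrix.smul_apply,
      Matrix.vecMulVec_apply, smul_eq_mul]
    exact Finset.sum_congr rfl fun s _ => Finset.sum_congr rfl fun a _ => by ring
  have hsyminv : (Sig⁻¹)ᵀ = Sig⁻¹ := by rw [Matrix.transpose_nonsing_inv, hsym]
  have hinv_mul : Sig⁻¹ * Sig = 1 := Matrix.nonsing_inv_mul _ hdet
  have hmul_inv : Sig * Sig⁻¹ = 1 := Matrix.mul_nonsing_inv _ hdet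
  have hPw : ∀ s a, (∑ s', P k s a s' * G s') = φ k s a ⬝ᵥ w := by
    intro s a
    simp only [hlowrank k hkH, hw, dotProduct, Finset.sum_mul, Finset.mul_sum]
    rw [Finset.sum_comm]
    exact Finset.sum_congr rfl fun s' _ => Finset.sum_congr rfl fun i _ => by ring
  have hW : w ⬝ᵥ Sig *ᵥ w = ∑ s, ∑ a, ν k s a * (φ k s a ⬝ᵥ w) ^ 2 := by
    rw [hSig]; exact quad_sum _ _ _
  have hJ : ∀ s a, (∑ s', P k s a s' * G s') ^ 2 ≤ ∑ s', P k s a s' * G s' ^ 2 := by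
    intro s a
    have h := sq_sum_le Finset.univ (fun s' => P k s a s') G (fun s' _ => hPnn k hkH s a s')
    rwa [hPsum k hkH s a, one_mul] at h
  have hWle : w ⬝ᵥ Sig *ᵥ w ≤ α * ∑ s, ∑ a, ν (k + 1) s a * g s a ^ 2 := by
    rw [hW]
    calc ∑ s, ∑ a, ν k s a * (φ k s a ⬝ᵥ w) ^ 2
        ≤ ∑ s, ∑ a, ν k s a * ∑ s', P k s a s' * G s' ^ 2 := by
          refine Finset.sum_le_sum fun s _ => Finset.sum_le_sum fun a _ => ?_
          refine mul_le_mul_of_nonneg_left ?_ (le_of_lt (hνpos k hkH s a))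
          rw [← hPw s a]
          exact hJ s a
      _ = ∑ s', (∑ s, ∑ a, ν k s a * P k s a s') * G s' ^ 2 := by
          simp only [Finset.mul_sum, Finset.sum_mul]
          rw [sum3_swap (fun s a s' => ν k s a * (P k s a s' * G s' ^ 2))]
          exact Finset.sum_congr rfl fun s' _ => Finset.sum_congr rfl fun s _ =>
            Finset.sum_congr rfl fun a _ => by ring
      _ = ∑ s', (∑ a', ν (k + 1) s' a') * G s' ^ 2 := by
          refine Finset.sum_congr rfl fun s' _ => ?_
          have hm := hνmarg (k + 1) (Nat.le_add_left 1 k) hhH s'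
          simp only [Nat.add_sub_cancel] at hm
          rw [hm]
      _ ≤ ∑ s', α * ∑ a', ν (k + 1) s' a' * g s' a' ^ 2 := by
          refine Finset.sum_le_sum fun s' _ => ?_
          have hGsq : G s' ^ 2 ≤ ∑ a', π (k + 1) s' a' * g s' a' ^ 2 := by
            have h := sq_sum_le Finset.univ (fun a' => π (k + 1) s' a') (fun a' => g s' a')
              (fun a' _ => hπnn (k + 1) hhH s' a')
            rwa [hπsum (k + 1) hhH s', one_mul] at h
          have hνnn : 0 ≤ ∑ a', ν (k + 1) s' a' :=
            Finset.sum_nonneg fun a' _ => le_of_lt (hνpos (k + 1) hhH s' a')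
          calc (∑ a', ν (k + 1) s' a') * G s' ^ 2
              ≤ (∑ a', ν (k + 1) s' a') * ∑ a', π (k + 1) s' a' * g s' a' ^ 2 :=
                mul_le_mul_of_nonneg_left hGsq hνnn
            _ = ∑ a', (π (k + 1) s' a' * ∑ a'', ν (k + 1) s' a'') * g s' a' ^ 2 := by
                rw [Finset.mul_sum]
                exact Finset.sum_congr rfl fun a' _ => by ring
            _ ≤ ∑ a', (α * ν (k + 1) s' a') * g s' a' ^ 2 :=
                Finset.sum_le_sum fun a' _ =>
                  mul_le_mul_of_nonneg_right (hratio (k + 1) hhH s' a') (sq_nonneg _)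
            _ = α * ∑ a', ν (k + 1) s' a' * g s' a' ^ 2 := by
                rw [Finset.mul_sum]
                exact Finset.sum_congr rfl fun a' _ => by ring
      _ = α * ∑ s, ∑ a, ν (k + 1) s a * g s a ^ 2 := by rw [Finset.mul_sum]
  have hq : ∀ s a, 0 ≤ φ k s a ⬝ᵥ Sig⁻¹ *ᵥ φ k s a := by
    intro s a
    have hpsd := (hpdk.inv).posSemidef
    simpa using hpsd.dotProduct_mulVec_nonneg (φ k s a)
  have hCS : ∀ s a, φ k s a ⬝ᵥ w ≤
      Real.sqrt (φ k s a ⬝ᵥ Sig⁻¹ *ᵥ φ k s a) * Real.sqrt (w ⬝ᵥ Sig *ᵥ w) := by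
    intro s a
    have h1 : (Sig⁻¹ *ᵥ φ k s a) ⬝ᵥ Sig *ᵥ w = φ k s a ⬝ᵥ w := by
      rw [dot_helper, hsyminv, Matrix.mulVec_mulVec, hinv_mul, Matrix.one_mulVec]
    have h2 : (Sig⁻¹ *ᵥ φ k s a) ⬝ᵥ Sig *ᵥ (Sig⁻¹ *ᵥ φ k s a)
        = φ k s a ⬝ᵥ Sig⁻¹ *ᵥ φ k s a := by
      rw [dot_helper, hsyminv, Matrix.mulVec_mulVec, hinv_mul, Matrix.one_mulVec]
    have hcs2 := cs_mat hpdk (Sig⁻¹ *ᵥ φ k s a) w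
    rw [h1, h2] at hcs2
    calc φ k s a ⬝ᵥ w ≤ |φ k s a ⬝ᵥ w| := le_abs_self _
      _ = Real.sqrt ((φ k s a ⬝ᵥ w) ^ 2) := (Real.sqrt_sq_eq_abs _).symm
      _ ≤ Real.sqrt ((φ k s a ⬝ᵥ Sig⁻¹ *ᵥ φ k s a) * (w ⬝ᵥ Sig *ᵥ w)) :=
          Real.sqrt_le_sqrt hcs2
      _ = _ := Real.sqrt_mul (hq s a) _
  have hocc : ∀ s a, 0 ≤ occ P d0 π k s a :=
    occ_nonneg P d0 π hd0nn k
      (fun j hj => hπnn j (Nat.lt_of_le_of_lt hj hkH))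
      (fun j hj => hPnn j (hj.trans hkH))
  have hA : (∑ s, ∑ a, occ P d0 π (k + 1) s a * g s a)
      = ∑ s, ∑ a, occ P d0 π k s a * (φ k s a ⬝ᵥ w) := by
    calc ∑ s', ∑ a', occ P d0 π (k + 1) s' a' * g s' a'
        = ∑ s', (∑ s, ∑ a, occ P d0 π k s a * P k s a s') * G s' := by
          refine Finset.sum_congr rfl fun s' _ => ?_
          simp only [hG]
          rw [Finset.mul_sum]
          refine Finset.sum_congr rfl fun a' _ => ?_
          simp only [occ]
          ring
      _ = ∑ s, ∑ a, occ P d0 π k s a * ∑ s', P k s a s' * G s' := by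
          simp only [Finset.sum_mul, Finset.mul_sum]
          rw [← sum3_swap (fun s a s' => occ P d0 π k s a * P k s a s' * G s')]
          exact Finset.sum_congr rfl fun s _ => Finset.sum_congr rfl fun a _ =>
            Finset.sum_congr rfl fun s' _ => by ring
      _ = _ := Finset.sum_congr rfl fun s _ => Finset.sum_congr rfl fun a _ => by
          rw [hPw s a]
  rw [hA]
  calc ∑ s, ∑ a, occ P d0 π k s a * (φ k s a ⬝ᵥ w)
      ≤ ∑ s, ∑ a, occ P d0 π k s a *
          (Real.sqrt (φ k s a ⬝ᵥ Sig⁻¹ *ᵥ φ k s a) * Real.sqrt (w ⬝ᵥ Sig *ᵥ w)) :=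
        Finset.sum_le_sum fun s _ => Finset.sum_le_sum fun a _ =>
          mul_le_mul_of_nonneg_left (hCS s a) (hocc s a)
    _ = (∑ s, ∑ a, occ P d0 π k s a * Real.sqrt (φ k s a ⬝ᵥ Sig⁻¹ *ᵥ φ k s a)) *
          Real.sqrt (w ⬝ᵥ Sig *ᵥ w) := by
        rw [Finset.sum_mul]
        refine Finset.sum_congr rfl fun s _ => ?_
        rw [Finset.sum_mul]
        exact Finset.sum_congr rfl fun a _ => by ring
    _ ≤ (∑ s, ∑ a, occ P d0 π k s a * Real.sqrt (φ k s a ⬝ᵥ Sig⁻¹ *ᵥ φ k s a)) *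
          Real.sqrt (α * ∑ s, ∑ a, ν (k + 1) s a * g s a ^ 2) :=
        mul_le_mul_of_nonneg_left (Real.sqrt_le_sqrt hWle)
          (Finset.sum_nonneg fun s _ => Finset.sum_nonneg fun a _ =>
            mul_nonneg (hocc s a) (Real.sqrt_nonneg _))
end

section
/- Online distribution-shift bound (V-type): Let f^1,…,f^T ∈ F, let λ > 0, and for each h define Σ_{t;h} = Σ_{τ=1}^t X_h(f^τ)·X_h(f^τ)ᵀ + λ·I_d (so Σ_{0;h} = λ·I_d). Then for every t ∈ {1,…,T} and every h ∈ {0,…,H−1}: |⟨W_h(f^t), X_h(f^t)⟩| ≤ sqrt( X_h(f^t)ᵀ Σ_{t−1;h}⁻¹ X_h(f^t) ) · sqrt( |A| · Σ_{i=1}^{t−1} Σ_{s} d^{π^{f^i}}_h(s)·(1/|A|)·Σ_a ( f^t_h(s,a) − (T_h f^t_{h+1})(s,a) )² + λ·B_W² ), where d^{π^{f^i}}_h(s) = Σ_a d^{π^{f^i}}_h(s,a) is the state marginal of the occupancy measure. -/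
open Finset Matrix
open scoped Classical

section Aux
variable {dd : ℕ}

lemma dot_vecMulVec (x y : Fin dd → ℝ) :
    y ⬝ᵥ (Matrix.vecMulVec x x) *ᵥ y = (x ⬝ᵥ y) ^ 2 := by
  have h2 : (x ⬝ᵥ y) ^ 2 = ∑ i, ∑ j, (x i * y i) * (x j * y j) := by
    rw [sq, dotProduct, Finset.sum_mul_sum]
  rw [h2]
  simp only [dotProduct, mulVec, vecMulVec_apply, Finset.mul_sum]
  exact Finset.sum_congr rfl fun i _ => Finset.sum_congr rfl fun j _ => by ring

lemma psd_vecMulVec (x : Fin dd → ℝ) : (Matrix.vecMulVec x x).PosSemidef := by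
  refine Matrix.PosSemidef.of_dotProduct_mulVec_nonneg ?_ ?_
  · ext i j
    simp [Matrix.conjTranspose_apply, Matrix.vecMulVec_apply, mul_comm]
  · intro y
    rw [star_trivial, dot_vecMulVec]
    exact sq_nonneg _

lemma psd_cs {M : Matrix (Fin dd) (Fin dd) ℝ} (hM : M.PosSemidef) (x y : Fin dd → ℝ) :
    (x ⬝ᵥ M *ᵥ y) ^ 2 ≤ (x ⬝ᵥ M *ᵥ x) * (y ⬝ᵥ M *ᵥ y) := by
  have ht : Mᵀ = M := by
    ext i j
    have := congrFun (congrFun hM.1 i) j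
    simpa [Matrix.conjTranspose_apply] using this
  have hsym : ∀ u v : Fin dd → ℝ, u ⬝ᵥ M *ᵥ v = v ⬝ᵥ M *ᵥ u := by
    intro u v
    rw [Matrix.dotProduct_mulVec, ← Matrix.mulVec_transpose, ht, dotProduct_comm]
  have hq : ∀ t : ℝ, 0 ≤ (y ⬝ᵥ M *ᵥ y) * (t * t) + (2 * (x ⬝ᵥ M *ᵥ y)) * t + x ⬝ᵥ M *ᵥ x := by
    intro t
    have h0 := hM.dotProduct_mulVec_nonneg (x + t • y)
    rw [star_trivial] at h0
    calc (0:ℝ) ≤ (x + t • y) ⬝ᵥ M *ᵥ (x + t • y) := h0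
    _ = (y ⬝ᵥ M *ᵥ y) * (t * t) + (2 * (x ⬝ᵥ M *ᵥ y)) * t + x ⬝ᵥ M *ᵥ x := by
        rw [Matrix.mulVec_add, Matrix.mulVec_smul, add_dotProduct,
          smul_dotProduct, dotProduct_add, dotProduct_add,
          dotProduct_smul, dotProduct_smul, hsym y x]
        simp only [smul_eq_mul]; ring
  have hd := discrim_le_zero hq
  rw [discrim] at hd
  nlinarith [hd]

lemma posdef_cs {Sg : Matrix (Fin dd) (Fin dd) ℝ} (hSg : Sg.PosDef) (x y : Fin dd → ℝ) :
    |x ⬝ᵥ y| ≤ Real.sqrt (x ⬝ᵥ Sg⁻¹ *ᵥ x) * Real.sqrt (y ⬝ᵥ Sg *ᵥ y) := by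
  have hinv : Sg⁻¹.PosDef := hSg.inv
  have h1 : Sg⁻¹ * Sg = 1 :=
    Matrix.nonsing_inv_mul _ (isUnit_iff_ne_zero.mpr hSg.det_pos.ne')
  have hy : Sg⁻¹ *ᵥ (Sg *ᵥ y) = y := by
    rw [Matrix.mulVec_mulVec, h1, Matrix.one_mulVec]
  have hcs := psd_cs hinv.posSemidef x (Sg *ᵥ y)
  rw [hy, dotProduct_comm (Sg *ᵥ y) y] at hcs
  have hnn : 0 ≤ x ⬝ᵥ Sg⁻¹ *ᵥ x := by
    have := hinv.posSemidef.dotProduct_mulVec_nonneg x; rwa [star_trivial] at this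
  calc |x ⬝ᵥ y| = Real.sqrt ((x ⬝ᵥ y) ^ 2) := (Real.sqrt_sq_eq_abs _).symm
  _ ≤ Real.sqrt ((x ⬝ᵥ Sg⁻¹ *ᵥ x) * (y ⬝ᵥ Sg *ᵥ y)) := Real.sqrt_le_sqrt hcs
  _ = _ := Real.sqrt_mul hnn _


lemma dot_sum_mulVec {ι : Type*} (s : Finset ι) (M : ι → Matrix (Fin dd) (Fin dd) ℝ)
    (u v : Fin dd → ℝ) :
    u ⬝ᵥ (∑ i ∈ s, M i) *ᵥ v = ∑ i ∈ s, u ⬝ᵥ (M i) *ᵥ v := by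
  classical
  induction s using Finset.induction_on with
  | empty => simp
  | insert _ _ hne ih =>
    rw [Finset.sum_insert hne, Finset.sum_insert hne, Matrix.add_mulVec,
      dotProduct_add, ih]

lemma psd_sum {ι : Type*} (s : Finset ι) (M : ι → Matrix (Fin dd) (Fin dd) ℝ)
    (h : ∀ i ∈ s, (M i).PosSemidef) : (∑ i ∈ s, M i).PosSemidef := by
  classical
  induction s using Finset.induction_on with
  | empty => simpa using Matrix.PosSemidef.zero
  | insert _ _ hne ih =>
    rename_i a t
    rw [Finset.sum_insert hne]
    exact (h a (Finset.mem_insert_self a t)).add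
      (ih fun i hi => h i (Finset.mem_insert_of_mem hi))

lemma posdef_reg (lam : ℝ) (hlam : 0 < lam) :
    (lam • (1 : Matrix (Fin dd) (Fin dd) ℝ)).PosDef := by
  refine Matrix.PosDef.of_dotProduct_mulVec_pos ?_ ?_
  · ext i j
    simp [Matrix.conjTranspose_apply, Matrix.one_apply, eq_comm]
  · intro x hx
    rw [star_trivial, Matrix.smul_mulVec, Matrix.one_mulVec, dotProduct_smul,
      smul_eq_mul]
    have h1 : 0 < x ⬝ᵥ x := by
      rcases Function.ne_iff.mp hx with ⟨i, hi⟩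
      have : (0:ℝ) < x i * x i := by
        have := mul_self_nonneg (x i)
        rcases this.lt_or_eq with h | h
        · exact h
        · exact absurd (by nlinarith [h.symm] : x i = 0) hi
      refine lt_of_lt_of_le this ?_
      have : ∀ j ∈ Finset.univ, (0:ℝ) ≤ x j * x j := fun j _ => mul_self_nonneg _
      exact Finset.single_le_sum this (Finset.mem_univ i)
    positivity

end Aux

lemma greedy_sum {S A : Type*} [Fintype A] [Nonempty A]
    (f : ℕ → S → A → ℝ) (h : ℕ) (s : S) : ∑ a, greedy f h s a = 1 := by
  simp [greedy]

lemma occ_facts {S A : Type*} [Fintype S] [Fintype A]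
    (P : ℕ → S → A → S → ℝ) (d0 : S → ℝ) (π : ℕ → S → A → ℝ) (H : ℕ)
    (hPnn : ∀ h < H, ∀ s a s', 0 ≤ P h s a s')
    (hPsum : ∀ h < H, ∀ s a, ∑ s', P h s a s' = 1)
    (hd0nn : ∀ s, 0 ≤ d0 s) (hd0sum : ∑ s, d0 s = 1)
    (hpnn : ∀ h s a, 0 ≤ π h s a) (hpsum : ∀ h s, ∑ a, π h s a = 1) :
    ∀ h < H, (∀ s a, 0 ≤ occ P d0 π h s a) ∧ (∑ s, ∑ a, occ P d0 π h s a = 1) := by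
  intro h
  induction h with
  | zero =>
    intro _
    refine ⟨fun s a => mul_nonneg (hd0nn s) (hpnn 0 s a), ?_⟩
    simp only [occ]
    rw [← hd0sum]
    exact Finset.sum_congr rfl fun s _ => by rw [← Finset.mul_sum, hpsum, mul_one]
  | succ h ih =>
    intro hlt
    have hh : h < H := lt_trans (Nat.lt_succ_self h) hlt
    obtain ⟨hnn, hsum⟩ := ih hh
    constructor
    · intro s' a'
      simp only [occ]
      exact mul_nonneg (Finset.sum_nonneg fun s _ => Finset.sum_nonneg fun a _ =>
        mul_nonneg (hnn s a) (hPnn h hh s a s')) (hpnn _ _ _)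
    · simp only [occ]
      have h1 : ∀ s' : S, ∑ a', (∑ s, ∑ a, occ P d0 π h s a * P h s a s') * π (h+1) s' a'
          = ∑ s, ∑ a, occ P d0 π h s a * P h s a s' := by
        intro s'
        rw [← Finset.mul_sum, hpsum, mul_one]
      rw [Finset.sum_congr rfl fun s' _ => h1 s', Finset.sum_comm]
      have h2 : ∀ s : S, ∑ s', ∑ a, occ P d0 π h s a * P h s a s'
          = ∑ a, occ P d0 π h s a := by
        intro s
        rw [Finset.sum_comm]
        refine Finset.sum_congr rfl fun a _ => ?_
        rw [← Finset.mul_sum, hPsum h hh, mul_one]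
      rw [Finset.sum_congr rfl fun s _ => h2 s, hsum]

/-- **Online distribution-shift bound (V-type bilinear model).** -/
theorem online_distribution_shift_Vtype
    {S A : Type*} [Fintype S] [Fintype A] [Nonempty S] [Nonempty A]
    (H : ℕ) (hH : 1 ≤ H)
    (P : ℕ → S → A → S → ℝ)
    (hPnn : ∀ h < H, ∀ s a s', 0 ≤ P h s a s')
    (hPsum : ∀ h < H, ∀ s a, ∑ s', P h s a s' = 1)
    (r : ℕ → S → A → ℝ)
    (d0 : S → ℝ) (hd0nn : ∀ s, 0 ≤ d0 s) (hd0sum : ∑ s, d0 s = 1)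
    (dd : ℕ) (Vmax BX BW : ℝ)
    (F : Set (ℕ → S → A → ℝ))
    (hFbdd : ∀ f ∈ F, ∀ h < H, ∀ s a, 0 ≤ f h s a ∧ f h s a ≤ Vmax)
    (hFH : ∀ f ∈ F, ∀ s a, f H s a = 0)
    (X W : ℕ → (ℕ → S → A → ℝ) → Fin dd → ℝ)
    (hX : ∀ f ∈ F, ∀ h < H, Real.sqrt (∑ i, X h f i ^ 2) ≤ BX)
    (hW : ∀ f ∈ F, ∀ h < H, Real.sqrt (∑ i, W h f i ^ 2) ≤ BW)
    (hbil : ∀ f ∈ F, ∀ g ∈ F, ∀ h < H,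
      |∑ s, (∑ a, occ P d0 (greedy f) h s a) *
          (g h s (argmaxA (g h s)) -
            bellman P r h (g (h + 1)) s (argmaxA (g h s)))|
        = |X h f ⬝ᵥ W h g|)
    (T : ℕ) (fseq : ℕ → (ℕ → S → A → ℝ))
    (hfseq : ∀ t ∈ Finset.Icc 1 T, fseq t ∈ F)
    (lam : ℝ) (hlam : 0 < lam) :
    ∀ t ∈ Finset.Icc 1 T, ∀ h < H,
      |W h (fseq t) ⬝ᵥ X h (fseq t)| ≤
        Real.sqrt (X h (fseq t) ⬝ᵥ
            ((∑ τ ∈ Finset.Icc 1 (t - 1),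
                Matrix.vecMulVec (X h (fseq τ)) (X h (fseq τ))) +
              lam • (1 : Matrix (Fin dd) (Fin dd) ℝ))⁻¹ *ᵥ X h (fseq t)) *
          Real.sqrt ((Fintype.card A : ℝ) *
              (∑ i ∈ Finset.Icc 1 (t - 1), ∑ s,
                (∑ a, occ P d0 (greedy (fseq i)) h s a) *
                  ((1 : ℝ) / (Fintype.card A : ℝ)) *
                  ∑ a, (fseq t h s a - bellman P r h (fseq t (h + 1)) s a) ^ 2) +
            lam * BW ^ 2) := by

  intro t ht h hh
  obtain ⟨ht1, htT⟩ := Finset.mem_Icc.mp ht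
  have hFt : fseq t ∈ F := hfseq t ht
  have hmem : ∀ τ ∈ Finset.Icc 1 (t-1), fseq τ ∈ F := by
    intro τ hτ
    obtain ⟨h1, h2⟩ := Finset.mem_Icc.mp hτ
    exact hfseq τ (Finset.mem_Icc.mpr ⟨h1, le_trans h2 (le_trans (Nat.sub_le t 1) htT)⟩)
  set Xt := X h (fseq t) with hXtdef
  set Wt := W h (fseq t) with hWtdef
  set Ms : Matrix (Fin dd) (Fin dd) ℝ :=
    ∑ τ ∈ Finset.Icc 1 (t - 1), Matrix.vecMulVec (X h (fseq τ)) (X h (fseq τ)) with hMs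
  have hpsd : Ms.PosSemidef := psd_sum _ _ fun τ _ => psd_vecMulVec _
  have hpd : (Ms + lam • (1 : Matrix (Fin dd) (Fin dd) ℝ)).PosDef :=
    Matrix.PosDef.posSemidef_add hpsd (posdef_reg lam hlam)
  have step1 : |Wt ⬝ᵥ Xt| ≤
      Real.sqrt (Xt ⬝ᵥ (Ms + lam • (1 : Matrix (Fin dd) (Fin dd) ℝ))⁻¹ *ᵥ Xt) *
      Real.sqrt (Wt ⬝ᵥ (Ms + lam • (1 : Matrix (Fin dd) (Fin dd) ℝ)) *ᵥ Wt) := by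
    rw [dotProduct_comm]
    exact posdef_cs hpd Xt Wt
  have hexp : Wt ⬝ᵥ (Ms + lam • (1 : Matrix (Fin dd) (Fin dd) ℝ)) *ᵥ Wt
      = (∑ τ ∈ Finset.Icc 1 (t-1), (X h (fseq τ) ⬝ᵥ Wt) ^ 2) + lam * (Wt ⬝ᵥ Wt) := by
    rw [Matrix.add_mulVec, dotProduct_add, hMs, dot_sum_mulVec,
      Matrix.smul_mulVec, Matrix.one_mulVec, dotProduct_smul, smul_eq_mul]
    congr 1
    exact Finset.sum_congr rfl fun τ _ => dot_vecMulVec _ _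
  have occf : ∀ τ : ℕ, (∀ s a, 0 ≤ occ P d0 (greedy (fseq τ)) h s a) ∧
      (∑ s, ∑ a, occ P d0 (greedy (fseq τ)) h s a = 1) := fun τ =>
    occ_facts P d0 (greedy (fseq τ)) H hPnn hPsum hd0nn hd0sum
      (fun h' s a => by unfold greedy; split <;> norm_num)
      (fun h' s => greedy_sum _ _ _) h hh
  have key : ∀ τ ∈ Finset.Icc 1 (t-1),
      (X h (fseq τ) ⬝ᵥ Wt) ^ 2 ≤
      ∑ s, (∑ a, occ P d0 (greedy (fseq τ)) h s a) *
        ∑ a, (fseq t h s a - bellman P r h (fseq t (h+1)) s a) ^ 2 := by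
    intro τ hτ
    obtain ⟨dnn, dsum⟩ := occf τ
    set d : S → ℝ := fun s => ∑ a, occ P d0 (greedy (fseq τ)) h s a with hd
    set e : S → ℝ := fun s => fseq t h s (argmaxA (fseq t h s)) -
        bellman P r h (fseq t (h+1)) s (argmaxA (fseq t h s)) with he
    have hdnn : ∀ s, 0 ≤ d s := fun s => Finset.sum_nonneg fun a _ => dnn s a
    have hds : ∑ s, d s = 1 := dsum
    have hb : |∑ s, d s * e s| = |X h (fseq τ) ⬝ᵥ Wt| :=
      hbil (fseq τ) (hmem τ hτ) (fseq t) hFt h hh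
    have h1 : (X h (fseq τ) ⬝ᵥ Wt) ^ 2 = (∑ s, d s * e s) ^ 2 := by
      rw [← sq_abs, ← sq_abs (∑ s, d s * e s), hb]
    rw [h1]
    have h2 : (∑ s, d s * e s)
        = ∑ s, Real.sqrt (d s) * (Real.sqrt (d s) * e s) :=
      Finset.sum_congr rfl fun s _ => by
        rw [← mul_assoc, Real.mul_self_sqrt (hdnn s)]
    rw [h2]
    calc (∑ s, Real.sqrt (d s) * (Real.sqrt (d s) * e s)) ^ 2
        ≤ (∑ s, Real.sqrt (d s) ^ 2) * ∑ s, (Real.sqrt (d s) * e s) ^ 2 :=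
          Finset.sum_mul_sq_le_sq_mul_sq _ _ _
      _ = (∑ s, d s) * ∑ s, d s * e s ^ 2 := by
          congr 1
          · exact Finset.sum_congr rfl fun s _ => Real.sq_sqrt (hdnn s)
          · exact Finset.sum_congr rfl fun s _ => by
              rw [mul_pow, Real.sq_sqrt (hdnn s)]
      _ = ∑ s, d s * e s ^ 2 := by rw [hds, one_mul]
      _ ≤ ∑ s, d s * ∑ a, (fseq t h s a - bellman P r h (fseq t (h+1)) s a) ^ 2 := by
          refine Finset.sum_le_sum fun s _ => mul_le_mul_of_nonneg_left ?_ (hdnn s)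
          exact Finset.single_le_sum
            (f := fun a => (fseq t h s a - bellman P r h (fseq t (h+1)) s a) ^ 2)
            (fun a _ => sq_nonneg _) (Finset.mem_univ (argmaxA (fseq t h s)))
  have hWbd : Wt ⬝ᵥ Wt ≤ BW ^ 2 := by
    have h0 : Wt ⬝ᵥ Wt = ∑ i, Wt i ^ 2 := by
      simp [dotProduct, sq]
    rw [h0]
    have h1 := hW (fseq t) hFt h hh
    have h2 : 0 ≤ ∑ i, Wt i ^ 2 := Finset.sum_nonneg fun i _ => sq_nonneg _
    calc ∑ i, Wt i ^ 2 = Real.sqrt (∑ i, Wt i ^ 2) ^ 2 := (Real.sq_sqrt h2).symm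
      _ ≤ BW ^ 2 := pow_le_pow_left₀ (Real.sqrt_nonneg _) h1 2
  have hA0 : (0:ℝ) < (Fintype.card A : ℝ) := by exact_mod_cast Fintype.card_pos
  have hre : (Fintype.card A : ℝ) *
      (∑ i ∈ Finset.Icc 1 (t - 1), ∑ s,
        (∑ a, occ P d0 (greedy (fseq i)) h s a) * ((1:ℝ)/(Fintype.card A : ℝ)) *
          ∑ a, (fseq t h s a - bellman P r h (fseq t (h+1)) s a) ^ 2)
      = ∑ i ∈ Finset.Icc 1 (t - 1), ∑ s,
          (∑ a, occ P d0 (greedy (fseq i)) h s a) *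
            ∑ a, (fseq t h s a - bellman P r h (fseq t (h+1)) s a) ^ 2 := by
    rw [Finset.mul_sum]
    refine Finset.sum_congr rfl fun i _ => ?_
    rw [Finset.mul_sum]
    refine Finset.sum_congr rfl fun s _ => ?_
    field_simp
  have hle : Wt ⬝ᵥ (Ms + lam • (1 : Matrix (Fin dd) (Fin dd) ℝ)) *ᵥ Wt ≤
      (Fintype.card A : ℝ) *
        (∑ i ∈ Finset.Icc 1 (t - 1), ∑ s,
          (∑ a, occ P d0 (greedy (fseq i)) h s a) * ((1:ℝ)/(Fintype.card A : ℝ)) *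
            ∑ a, (fseq t h s a - bellman P r h (fseq t (h+1)) s a) ^ 2) + lam * BW ^ 2 := by
    rw [hexp, hre]
    exact add_le_add (Finset.sum_le_sum key) (mul_le_mul_of_nonneg_left hWbd hlam.le)
  calc |Wt ⬝ᵥ Xt| ≤
      Real.sqrt (Xt ⬝ᵥ (Ms + lam • (1 : Matrix (Fin dd) (Fin dd) ℝ))⁻¹ *ᵥ Xt) *
      Real.sqrt (Wt ⬝ᵥ (Ms + lam • (1 : Matrix (Fin dd) (Fin dd) ℝ)) *ᵥ Wt) := step1
    _ ≤ Real.sqrt (Xt ⬝ᵥ (Ms + lam • (1 : Matrix (Fin dd) (Fin dd) ℝ))⁻¹ *ᵥ Xt) *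
      Real.sqrt ((Fintype.card A : ℝ) *
        (∑ i ∈ Finset.Icc 1 (t - 1), ∑ s,
          (∑ a, occ P d0 (greedy (fseq i)) h s a) * ((1:ℝ)/(Fintype.card A : ℝ)) *
            ∑ a, (fseq t h s a - bellman P r h (fseq t (h+1)) s a) ^ 2) + lam * BW ^ 2) :=
      mul_le_mul_of_nonneg_left (Real.sqrt_le_sqrt hle) (Real.sqrt_nonneg _)
end
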